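/- Let l, m be natural numbers with m ≤ l, m ≡ 0 (mod 4) and l ≡ 2 (mod 8). Then H_l^m(−2) ≡ 0 (mod 8). -/

import Mathlib

/-- The coefficient `σ_l^m(k)` of the Holt–Ille polynomial `H_l^m`. -/
def sigmaLM (l m k : ℕ) : ℚ :=
  if (l + m) % 2 = 0 then
    (-2 : ℚ) ^ k * (((l - m) / 2).choose k : ℚ) * (((l + m) / 2).choose k : ℚ) /
      (((2 * k).choose k : ℚ))
  else
    (-2 : ℚ) ^ k * (((l - m) / 2).choose k : ℚ) * (((l + m) / 2).choose k : ℚ) /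
      ((((2 * k).choose k : ℚ)) * (2 * (k : ℚ) + 1))

/-- The value `H_l^m(−2) = Σ_{k=0}^{⌊(l−m)/2⌋} σ_l^m(k)`. -/
def HLM (l m : ℕ) : ℚ := ∑ k ∈ Finset.range ((l - m) / 2 + 1), sigmaLM l m k

/-- `a ≡ b (mod 2^N)` for rationals (with odd denominators), expressed via the 2-adic
norm on `ℚ₂`: it means `‖a − b‖₂ ≤ 2^(−N)`. -/
def Cong2 (a b : ℚ) (N : ℕ) : Prop :=
  ‖((a - b : ℚ) : ℚ_[2])‖ ≤ (2 : ℝ) ^ (-(N : ℤ))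

/-!
For `l + m` even, write `a = (l - m) / 2` and `b = (l + m) / 2`. Since
`C(2k, k) · k! = 2^k · (2k - 1)!!`, the terms are
`σ(k) = (-1)^k · k! · C(a, k) · C(b, k) / (2k - 1)!!` with an odd denominator, so
`‖σ(k)‖₂ ≤ ‖k!‖₂ ≤ 2⁻³` for `k ≥ 4`. The first four terms add up to `headPoly a b / 90` for an
integer polynomial `headPoly`, and the congruences `a + b = l ≡ 2 (mod 8)` and
`b - a = m ≡ 0 (mod 4)` force `16 ∣ headPoly a b`. The ultrametric inequality then bounds the
whole sum by `2⁻³`.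
-/

open Nat Finset

theorem Nat.odd_doubleFactorial_two_mul_add_one : ∀ n : ℕ, Odd (2 * n + 1)‼
  | 0 => odd_one
  | n + 1 => by
    rw [show 2 * (n + 1) + 1 = 2 * n + 1 + 2 by ring, doubleFactorial_add_two]
    exact (odd_two_mul_add_one (n + 1)).mul (odd_doubleFactorial_two_mul_add_one n)

theorem Nat.odd_doubleFactorial_two_mul_sub_one : ∀ n : ℕ, Odd (2 * n - 1)‼
  | 0 => odd_one
  | n + 1 => by
    rw [show 2 * (n + 1) - 1 = 2 * n + 1 by omega]
    exact odd_doubleFactorial_two_mul_add_one n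

theorem Nat.centralBinom_mul_factorial (n : ℕ) :
    centralBinom n * n ! = 2 ^ n * (2 * n - 1)‼ := by
  apply Nat.eq_of_mul_eq_mul_right n.factorial_pos
  rcases n with _ | n
  · rfl
  calc centralBinom (n + 1) * (n + 1)! * (n + 1)! = (2 * (n + 1))! := by
        simpa [centralBinom_eq_two_mul_choose, two_mul] using
          choose_mul_factorial_mul_factorial (Nat.le_add_left (n + 1) (n + 1))
    _ = (2 * (n + 1))‼ * (2 * n + 1)‼ := by
        rw [show 2 * (n + 1) = 2 * n + 1 + 1 by ring, factorial_eq_mul_doubleFactorial]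
    _ = 2 ^ (n + 1) * (2 * (n + 1) - 1)‼ * (n + 1)! := by
        rw [doubleFactorial_two_mul, show 2 * (n + 1) - 1 = 2 * n + 1 by omega]; ring

theorem Padic.norm_natCast_le_one {p : ℕ} [Fact p.Prime] (n : ℕ) : ‖(n : ℚ_[p])‖ ≤ 1 := by
  simpa using Padic.norm_int_le_one (p := p) n

theorem norm_factorial_le_of_four_le {k : ℕ} (hk : 4 ≤ k) : ‖(k ! : ℚ_[2])‖ ≤ 2 ^ (-3 : ℤ) := by
  have h := (Padic.norm_int_le_pow_iff_dvd (p := 2) (k ! : ℤ) 3).2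
    (Int.natCast_dvd_natCast.2 ((by decide : 2 ^ 3 ∣ 4 !).trans (factorial_dvd_factorial hk)))
  simpa using h

def headPoly {R : Type*} [CommRing R] (a b : R) : R :=
  90 - 90 * a * b + 15 * a * (a - 1) * b * (b - 1) - a * (a - 1) * (a - 2) * b * (b - 1) * (b - 2)

theorem headPoly_zmod_sixteen_eq_zero :
    ∀ a b : ZMod 16, 2 * (a + b) = 4 → 4 * a = 4 * b → headPoly a b = 0 := by
  unfold headPoly; decide

theorem norm_headPoly_div_le {a b : ℕ} (hab : (a + b) % 8 = 2) (hba : a % 4 = b % 4) :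
    ‖((headPoly (a : ℚ) b / 90 : ℚ) : ℚ_[2])‖ ≤ 2 ^ (-3 : ℤ) := by
  have hdvd : ((2 ^ 4 : ℕ) : ℤ) ∣ headPoly (a : ℤ) b := by
    rw [← ZMod.intCast_zmod_eq_zero_iff_dvd]
    push_cast [headPoly]
    refine headPoly_zmod_sixteen_eq_zero _ _ ?_ ?_
    · exact_mod_cast (ZMod.natCast_eq_natCast_iff' (2 * (a + b)) 4 16).2 (by omega)
    · exact_mod_cast (ZMod.natCast_eq_natCast_iff' (4 * a) (4 * b) 16).2 (by omega)
  have hnum := (Padic.norm_int_le_pow_iff_dvd (p := 2) _ 4).2 (by exact_mod_cast hdvd)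
  have hden : ‖(90 : ℚ_[2])‖ = 2 ^ (-1 : ℤ) := by
    rw [show (90 : ℚ_[2]) = (2 : ℕ) * (45 : ℕ) by norm_num, norm_mul, Padic.norm_p,
      Padic.norm_natCast_eq_one_iff.2 (by decide)]
    norm_num
  push_cast at hnum ⊢
  rw [norm_div, hden, div_le_iff₀ (by positivity), ← zpow_add₀ two_ne_zero]
  simpa [headPoly] using hnum

section
variable {l m : ℕ}

theorem sigmaLM_eq_zero_of_lt {k : ℕ} (hk : (l - m) / 2 < k) : sigmaLM l m k = 0 := by
  simp [sigmaLM, choose_eq_zero_of_lt hk]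

theorem HLM_eq_sum_range {n : ℕ} (hn : (l - m) / 2 < n) :
    HLM l m = ∑ k ∈ range n, sigmaLM l m k :=
  sum_subset (range_subset_range.2 hn) fun _ _ hk => sigmaLM_eq_zero_of_lt (by simpa using hk)

theorem sigmaLM_of_even (h : (l + m) % 2 = 0) (k : ℕ) :
    sigmaLM l m k = (-1) ^ k * k ! * ((l - m) / 2).choose k * ((l + m) / 2).choose k /
      (2 * k - 1)‼ := by
  have hC : ((2 * k).choose k : ℚ) ≠ 0 := by exact_mod_cast (choose_pos (by omega)).ne'
  have hd : ((2 * k - 1)‼ : ℚ) ≠ 0 := by exact_mod_cast (doubleFactorial_pos _).ne'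
  have key : ((2 * k).choose k : ℚ) * k ! = 2 ^ k * (2 * k - 1)‼ := by
    exact_mod_cast centralBinom_eq_two_mul_choose k ▸ centralBinom_mul_factorial k
  rw [sigmaLM, if_pos h, div_eq_div_iff hC hd, neg_pow]
  linear_combination (-(-1) ^ k * (((l - m) / 2).choose k : ℚ) * ((l + m) / 2).choose k) * key

theorem norm_sigmaLM_le_norm_factorial (h : (l + m) % 2 = 0) (k : ℕ) :
    ‖(sigmaLM l m k : ℚ_[2])‖ ≤ ‖(k ! : ℚ_[2])‖ := by
  have hd : ‖((2 * k - 1)‼ : ℚ_[2])‖ = 1 :=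
    Padic.norm_natCast_eq_one_iff.2 (odd_doubleFactorial_two_mul_sub_one k).coprime_two_left
  rw [sigmaLM_of_even h]
  push_cast
  rw [norm_div, hd, div_one, norm_mul, norm_mul, norm_mul, norm_pow, norm_neg, norm_one, one_pow,
    one_mul]
  calc _ ≤ ‖(k ! : ℚ_[2])‖ * 1 * 1 := by gcongr <;> exact Padic.norm_natCast_le_one _
    _ = _ := by ring

theorem sum_range_four_sigmaLM (h : (l + m) % 2 = 0) :
    ∑ k ∈ range 4, sigmaLM l m k = headPoly (((l - m) / 2 : ℕ) : ℚ) ((l + m) / 2 : ℕ) / 90 := by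
  simp only [sum_range_succ, sum_range_zero, sigmaLM_of_even h, cast_choose_eq_descPochhammer_div,
    descPochhammer_succ_right, descPochhammer_zero, Polynomial.eval_mul, Polynomial.eval_sub,
    Polynomial.eval_X, Polynomial.eval_one, Polynomial.eval_natCast, headPoly]
  norm_num [doubleFactorial, factorial]
  ring

end

/-- If `m ≡ 0 (mod 4)`, `m ≤ l` and `l ≡ 2 (mod 8)`, then `H_l^m(−2) ≡ 0 (mod 8)`. -/
theorem HLM_cong_zero_of_l_mod_eight (l m : ℕ) (hml : m ≤ l) (hm : m % 4 = 0)
    (hl : l % 8 = 2) : Cong2 (HLM l m) 0 3 := by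
  have hpar : (l + m) % 2 = 0 := by omega
  have hsplit : HLM l m = ∑ k ∈ range 4, sigmaLM l m k +
      ∑ k ∈ range ((l - m) / 2), sigmaLM l m (4 + k) := by
    rw [← sum_range_add, HLM_eq_sum_range (n := 4 + (l - m) / 2) (by omega)]
  have hhead : ‖((∑ k ∈ range 4, sigmaLM l m k : ℚ) : ℚ_[2])‖ ≤ 2 ^ (-3 : ℤ) := by
    rw [sum_range_four_sigmaLM hpar]
    exact norm_headPoly_div_le (by omega) (by omega)
  have htail : ‖((∑ k ∈ range ((l - m) / 2), sigmaLM l m (4 + k) : ℚ) : ℚ_[2])‖ ≤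
      2 ^ (-3 : ℤ) := by
    push_cast
    exact IsUltrametricDist.norm_sum_le_of_forall_le_of_nonneg (by positivity) fun k _ =>
      (norm_sigmaLM_le_norm_factorial hpar _).trans (norm_factorial_le_of_four_le (by omega))
  rw [Cong2, sub_zero, hsplit, Rat.cast_add]
  exact (IsUltrametricDist.norm_add_le_max _ _).trans (max_le hhead htail)
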